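/- The function f: ℤ² → ℝ defined by f(x₁,x₂) = |2x₁ − x₂| is convex-extensible (it is the restriction to ℤ² of the convex function |2x₁ − x₂| on ℝ²) but is not integrally convex. -/

import Mathlib

noncomputable section

def coeZR {n : ℕ} (z : Fin n → ℤ) : Fin n → ℝ := fun i => (z i : ℝ)

def IntNbhd {n : ℕ} (x : Fin n → ℝ) : Set (Fin n → ℤ) :=
  {z | ∀ i, |x i - (z i : ℝ)| < 1}

def IntegrallyConvexSet {n : ℕ} (S : Set (Fin n → ℤ)) : Prop :=
  ∀ x ∈ convexHull ℝ (coeZR '' S), x ∈ convexHull ℝ (coeZR '' (S ∩ IntNbhd x))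
def localConvexExt {n : ℕ} (f : (Fin n → ℤ) → EReal) (x : Fin n → ℝ) : EReal :=
  sInf { v : EReal | ∃ l : (Fin n → ℤ) →₀ ℝ,
    (∀ z, 0 ≤ l z) ∧ (∀ z ∈ l.support, z ∈ IntNbhd x) ∧
    (l.sum fun _ a => a) = 1 ∧
    (l.sum fun z a => a • coeZR z) = x ∧
    v = l.sum fun z a => (a : EReal) * f z }

def ERealConvexOn {n : ℕ} (g : (Fin n → ℝ) → EReal) : Prop :=
  ∀ x y : Fin n → ℝ, ∀ a b : ℝ, 0 ≤ a → 0 ≤ b → a + b = 1 →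
    g (a • x + b • y) ≤ (a : EReal) * g x + (b : EReal) * g y

def IntegrallyConvexFn {n : ℕ} (f : (Fin n → ℤ) → EReal) : Prop :=
  ERealConvexOn (localConvexExt f)
/-! The convex function `|2 x₀ - x₁|` vanishes at the integer points `(0,0)` and `(1,2)`,
but the only integer points within `ℓ∞`-distance `< 1` of their midpoint `(1/2, 1)` are `(0,1)` and
`(1,1)`, where it equals `1`. So the local convex extension is `0` at both ends and `1` at the
midpoint, and cannot be convex. -/

theorem EReal.coe_finset_sum {ι : Type*} (s : Finset ι) (g : ι → ℝ) :
    ((∑ i ∈ s, g i : ℝ) : EReal) = ∑ i ∈ s, (g i : EReal) :=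
  map_sum (⟨⟨Real.toEReal, EReal.coe_zero⟩, EReal.coe_add⟩ : ℝ →+ EReal) g s

section LocalConvexExt

variable {n : ℕ} {f : (Fin n → ℤ) → EReal}

theorem localConvexExt_coeZR_le (z : Fin n → ℤ) : localConvexExt f (coeZR z) ≤ f z := by
  refine sInf_le ⟨Finsupp.single z 1, fun w => ?_, fun w hw => ?_, ?_, ?_, ?_⟩
  · rw [Finsupp.single_apply]
    split_ifs <;> norm_num
  · obtain rfl := Finset.mem_singleton.1 (Finsupp.support_single_subset hw)
    simp [IntNbhd, coeZR]
  · simp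
  · simp
  · simp

theorem le_localConvexExt {x : Fin n → ℝ} {c : ℝ} (hc : ∀ z ∈ IntNbhd x, (c : EReal) ≤ f z) :
    (c : EReal) ≤ localConvexExt f x := by
  refine le_sInf ?_
  rintro v ⟨l, hl_nonneg, hl_supp, hl_sum, -, rfl⟩
  calc (c : EReal) = ((l.sum fun _ a => a * c : ℝ) : EReal) := by
        rw [← Finsupp.sum_mul, hl_sum, one_mul]
    _ = l.sum fun _ a => (a : EReal) * c := by
        simp only [Finsupp.sum, EReal.coe_finset_sum, EReal.coe_mul]
    _ ≤ l.sum fun z a => (a : EReal) * f z :=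
        Finset.sum_le_sum fun z hz =>
          mul_le_mul_of_nonneg_left (hc z (hl_supp z hz)) (EReal.coe_nonneg.2 (hl_nonneg z))

theorem not_integrallyConvexFn_of_midpoint (z w : Fin n → ℤ) {a b c : ℝ}
    (hz : f z ≤ a) (hw : f w ≤ b) (hab : a + b < 2 * c)
    (hc : ∀ u ∈ IntNbhd ((1 / 2 : ℝ) • coeZR z + (1 / 2 : ℝ) • coeZR w), (c : EReal) ≤ f u) :
    ¬ IntegrallyConvexFn f := by
  intro hf
  have hmid := hf (coeZR z) (coeZR w) (1 / 2) (1 / 2) (by norm_num) (by norm_num) (by norm_num)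
  have : (c : EReal) ≤ ((1 / 2 * a + 1 / 2 * b : ℝ) : EReal) :=
    calc (c : EReal) ≤ localConvexExt f ((1 / 2 : ℝ) • coeZR z + (1 / 2 : ℝ) • coeZR w) :=
          le_localConvexExt hc
      _ ≤ ((1 / 2 : ℝ) : EReal) * localConvexExt f (coeZR z)
            + ((1 / 2 : ℝ) : EReal) * localConvexExt f (coeZR w) := hmid
      _ ≤ ((1 / 2 : ℝ) : EReal) * a + ((1 / 2 : ℝ) : EReal) * b := by
          gcongr
          exacts [(localConvexExt_coeZR_le z).trans hz, (localConvexExt_coeZR_le w).trans hw]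
      _ = ((1 / 2 * a + 1 / 2 * b : ℝ) : EReal) := by norm_cast
  have := EReal.coe_le_coe_iff.1 this
  linarith

end LocalConvexExt

theorem mem_intNbhd_half_one {u : Fin 2 → ℤ} (hu : u ∈ IntNbhd ![1 / 2, 1]) :
    (u 0 = 0 ∨ u 0 = 1) ∧ u 1 = 1 := by
  have h0 := abs_lt.1 (hu 0)
  have h1 := abs_lt.1 (hu 1)
  simp only [Matrix.cons_val_zero, Matrix.cons_val_one] at h0 h1
  have l0 : -1 < u 0 := by exact_mod_cast (by linarith : (-1 : ℝ) < u 0)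
  have r0 : u 0 < 2 := by exact_mod_cast (by linarith : (u 0 : ℝ) < 2)
  have l1 : 0 < u 1 := by exact_mod_cast (by linarith : (0 : ℝ) < u 1)
  have r1 : u 1 < 2 := by exact_mod_cast (by linarith : (u 1 : ℝ) < 2)
  omega

theorem stmt13 :
    ConvexOn ℝ Set.univ (fun x : Fin 2 → ℝ => |2 * x 0 - x 1|) ∧
    (∀ z : Fin 2 → ℤ,
      (fun x : Fin 2 → ℝ => |2 * x 0 - x 1|) (coeZR z) = ((|2 * z 0 - z 1| : ℤ) : ℝ)) ∧
    ¬ IntegrallyConvexFn (fun z : Fin 2 → ℤ => (((|2 * z 0 - z 1| : ℤ) : ℝ) : EReal)) := by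
  refine ⟨?_, fun z => by simp [coeZR], ?_⟩
  · let L : (Fin 2 → ℝ) →ₗ[ℝ] ℝ := 2 • LinearMap.proj 0 - LinearMap.proj 1
    simpa [L, Function.comp_def] using (convexOn_norm (E := ℝ) convex_univ).comp_linearMap L
  · have hmid : (1 / 2 : ℝ) • coeZR ![0, 0] + (1 / 2 : ℝ) • coeZR ![1, 2] = ![1 / 2, 1] := by
      ext i
      fin_cases i <;> norm_num [coeZR]
    refine not_integrallyConvexFn_of_midpoint ![0, 0] ![1, 2] (a := 0) (b := 0) (c := 1)
      (by simp) (by simp) (by norm_num) ?_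
    rw [hmid]
    intro u hu
    obtain ⟨h0 | h0, h1⟩ := mem_intNbhd_half_one hu <;> simp [h0, h1]
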